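/- arXiv:1702.08213 — 2 statements merged into one kernel-verified Lean document; each statement's English description precedes it below -/
import Mathlib

section
/- For every x₀ ∈ E₁ and every φ = (x̂, ŷ) ∈ C_β^−(E₁ × E₂), the function I^ε_{x₀}(φ) again belongs to C_β^−(E₁ × E₂) (in particular all the integrals defining it converge), and there exists a constant C₃ ≥ 0, independent of φ, such that ‖I^ε_{x₀}(φ)‖_{C_β^−} ≤ ρ(ε)·‖φ‖_{C_β^−} + C₃. -/
open MeasureTheory Real Filter

noncomputable section

/-- Weighted sup-norm `sup_{t ≤ 0} e^{-β t} ‖φ t‖` on `(-∞,0]`. -/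
def negNorm {E : Type*} [NormedAddCommGroup E] (β : ℝ) (φ : ℝ → E) : ℝ :=
  ⨆ t : Set.Iic (0 : ℝ), Real.exp (-β * t.1) * ‖φ t.1‖

/-- Membership in the Banach space `C_β^-(E)` of continuous functions on `(-∞,0]`
with finite weighted sup-norm. -/
def MemCneg {E : Type*} [NormedAddCommGroup E] (β : ℝ) (φ : ℝ → E) : Prop :=
  ContinuousOn φ (Set.Iic 0) ∧
    BddAbove (Set.range fun t : Set.Iic (0 : ℝ) => Real.exp (-β * t.1) * ‖φ t.1‖)

/-- Weighted sup-norm `sup_{t ≥ 0} e^{-β t} ‖φ t‖` on `[0,∞)`. -/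
def posNorm {E : Type*} [NormedAddCommGroup E] (β : ℝ) (φ : ℝ → E) : ℝ :=
  ⨆ t : Set.Ici (0 : ℝ), Real.exp (-β * t.1) * ‖φ t.1‖

/-- Membership in the Banach space `C_β^+(E)` of continuous functions on `[0,∞)`
with finite weighted sup-norm. -/
def MemCpos {E : Type*} [NormedAddCommGroup E] (β : ℝ) (φ : ℝ → E) : Prop :=
  ContinuousOn φ (Set.Ici 0) ∧
    BddAbove (Set.range fun t : Set.Ici (0 : ℝ) => Real.exp (-β * t.1) * ‖φ t.1‖)

variable {E₁ E₂ : Type*}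
  [NormedAddCommGroup E₁] [NormedSpace ℝ E₁]
  [NormedAddCommGroup E₂] [NormedSpace ℝ E₂]

/-- Slow component of the Lyapunov–Perron operator `I^ε_{x₀}`. -/
def LPslow (S : E₁ →L[ℝ] E₁) (g1 : ℝ → E₁ → E₂ → E₁) (x0 : E₁)
    (x : ℝ → E₁) (y : ℝ → E₂) (t : ℝ) : E₁ :=
  NormedSpace.exp (t • S) x0 +
    ∫ s in (0:ℝ)..t, NormedSpace.exp ((t - s) • S) (g1 s (x s) (y s))

/-- Fast component of the Lyapunov–Perron operator `I^ε_{x₀}`. -/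
def LPfast (F : E₂ →L[ℝ] E₂) (g2 : ℝ → E₁ → E₂ → E₂) (ε : ℝ)
    (x : ℝ → E₁) (y : ℝ → E₂) (t : ℝ) : E₂ :=
  (1/ε) • ∫ s in Set.Iic t, NormedSpace.exp (((t - s)/ε) • F) (g2 s (x s) (y s))


/-!
For `φ = (x, y)` in `C_β^-` the Lipschitz bound gives `‖ĝᵢ(s, φ(s))‖ ≤ A e^{-(γ/ε) s}` on
`(-∞, 0]`, with `A = M + K ‖φ‖` and `M` the bound on `e^{(γ/ε) s} ‖ĝᵢ(s, 0, 0)‖`. Against the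
semigroup bounds, the weighted integrands of the slow and the fast component are then at most
`A e^{(γs + γ/ε)(t - s)}` on `[t, 0]` and `A e^{((γ + γf)/ε)(t - s)}` on `(-∞, t]`, whose
integrals are `A ε/(γ + ε γs)` and `A ε/(-(γ + γf))`; summing gives `ρ(ε) ‖φ‖ + C₃`.
Measurability of `s ↦ ĝᵢ(s, φ(s))` is the Carathéodory property of `ĝᵢ`, and continuity in `t`
follows by writing `e^{(t-s)T} = e^{tT} e^{-sT}`, which turns each component into a continuous
operator applied to a primitive.
-/

open Set

section WeightedNorm

variable {V : Type*} [NormedAddCommGroup V] {β : ℝ} {φ : ℝ → V}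

theorem exp_neg_mul_mul_le_iff {t y C : ℝ} : exp (-β * t) * y ≤ C ↔ y ≤ C * exp (β * t) := by
  rw [neg_mul, exp_neg, inv_mul_le_iff₀ (exp_pos _), mul_comm]

theorem MemCneg.norm_le (hφ : MemCneg β φ) {t : ℝ} (ht : t ≤ 0) :
    ‖φ t‖ ≤ negNorm β φ * exp (β * t) :=
  exp_neg_mul_mul_le_iff.1 (le_ciSup hφ.2 (⟨t, ht⟩ : Iic (0 : ℝ)))

theorem memCneg_and_negNorm_le {C : ℝ} (hφ : ContinuousOn φ (Iic 0))
    (hC : ∀ t ≤ 0, ‖φ t‖ ≤ C * exp (β * t)) : MemCneg β φ ∧ negNorm β φ ≤ C := by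
  have h : ∀ t : Iic (0 : ℝ), exp (-β * t) * ‖φ t‖ ≤ C :=
    fun t => exp_neg_mul_mul_le_iff.2 (hC t t.2)
  exact ⟨⟨hφ, C, forall_mem_range.2 h⟩, ciSup_le h⟩

end WeightedNorm

section Nonlinearity

variable {V W Z : Type*} [NormedAddCommGroup V] [NormedAddCommGroup W] [NormedAddCommGroup Z]
  {K : ℝ}

theorem continuous_uncurry_of_lipschitz {f : V → W → Z}
    (hf : ∀ x₁ y₁ x₂ y₂, ‖f x₁ y₁ - f x₂ y₂‖ ≤ K * (‖x₁ - x₂‖ + ‖y₁ - y₂‖)) :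
    Continuous fun p : V × W => f p.1 p.2 := by
  refine continuous_iff_continuousAt.2 fun p => tendsto_iff_norm_sub_tendsto_zero.2 <|
    squeeze_zero (fun _ => norm_nonneg _) (fun q => hf _ _ _ _) ?_
  have : Continuous fun q : V × W => K * (‖q.1 - p.1‖ + ‖q.2 - p.2‖) := by fun_prop
  simpa using this.tendsto p

theorem norm_le_of_lipschitz {f : V → W → Z}
    (hf : ∀ x₁ y₁ x₂ y₂, ‖f x₁ y₁ - f x₂ y₂‖ ≤ K * (‖x₁ - x₂‖ + ‖y₁ - y₂‖)) (x : V) (y : W) :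
    ‖f x y‖ ≤ ‖f 0 0‖ + K * (‖x‖ + ‖y‖) := by
  simpa using (norm_le_norm_add_norm_sub' (f x y) (f 0 0)).trans (add_le_add_right (hf x y 0 0) _)

theorem norm_comp_le_of_memCneg {g : ℝ → V → W → Z} {M β : ℝ}
    (hgl : ∀ t x₁ y₁ x₂ y₂, ‖g t x₁ y₁ - g t x₂ y₂‖ ≤ K * (‖x₁ - x₂‖ + ‖y₁ - y₂‖)) (hK : 0 ≤ K)
    (hg0 : ∀ t ≤ 0, ‖g t 0 0‖ ≤ M * exp (β * t)) {x : ℝ → V} {y : ℝ → W}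
    (hx : MemCneg β x) (hy : MemCneg β y) {t : ℝ} (ht : t ≤ 0) :
    ‖g t (x t) (y t)‖ ≤ (M + K * (negNorm β x + negNorm β y)) * exp (β * t) :=
  calc ‖g t (x t) (y t)‖ ≤ ‖g t 0 0‖ + K * (‖x t‖ + ‖y t‖) := norm_le_of_lipschitz (hgl t) _ _
    _ ≤ M * exp (β * t) + K * (negNorm β x * exp (β * t) + negNorm β y * exp (β * t)) := by
      gcongr
      exacts [hg0 t ht, hx.norm_le ht, hy.norm_le ht]
    _ = (M + K * (negNorm β x + negNorm β y)) * exp (β * t) := by ring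

theorem aestronglyMeasurable_comp_of_lipschitz
    [MeasurableSpace V] [BorelSpace V] [SecondCountableTopology V]
    [MeasurableSpace W] [BorelSpace W] [SecondCountableTopology W]
    [MeasurableSpace Z] [BorelSpace Z] [SecondCountableTopology Z]
    {g : ℝ → V → W → Z} (hgm : ∀ x y, Measurable fun t => g t x y)
    (hgl : ∀ t x₁ y₁ x₂ y₂, ‖g t x₁ y₁ - g t x₂ y₂‖ ≤ K * (‖x₁ - x₂‖ + ‖y₁ - y₂‖))
    {μ : Measure ℝ} {s : Set ℝ} (hs : MeasurableSet s) {x : ℝ → V} {y : ℝ → W}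
    (hx : ContinuousOn x s) (hy : ContinuousOn y s) :
    AEStronglyMeasurable (fun t => g t (x t) (y t)) (μ.restrict s) := by
  have hg : Measurable (Function.uncurry fun (p : V × W) t => g t p.1 p.2) :=
    measurable_uncurry_of_continuous_of_measurable
      (fun t => continuous_uncurry_of_lipschitz (hgl t)) fun p => hgm p.1 p.2
  have hxy : AEMeasurable (fun t => ((x t, y t), t)) (μ.restrict s) :=
    ((hx.aestronglyMeasurable hs).aemeasurable.prodMk
      (hy.aestronglyMeasurable hs).aemeasurable).prodMk aemeasurable_id
  exact (hg.comp_aemeasurable hxy).aestronglyMeasurable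

end Nonlinearity

section Propagator

-- `U τ` stands for `exp (τ • S)` or `exp ((τ / ε) • F)`, and `G s` for `ĝᵢ (s, φ s)`.
variable {V : Type*} [NormedAddCommGroup V] [NormedSpace ℝ V]
  {U : ℝ → V →L[ℝ] V} {G : ℝ → V} {A β ω t : ℝ}

theorem exp_mul_sub_mul_le {s a : ℝ} (ha : a ≤ A * exp (β * s)) :
    exp (ω * (t - s)) * a ≤ A * exp (ω * t) * exp ((β - ω) * s) :=
  calc exp (ω * (t - s)) * a ≤ exp (ω * (t - s)) * (A * exp (β * s)) := by gcongr
    _ = A * exp (ω * t) * exp ((β - ω) * s) := by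
      rw [mul_left_comm, ← exp_add, mul_assoc, ← exp_add]; ring_nf

theorem integrableOn_Icc_apply_of_norm_le (hU : Continuous U)
    (hG : AEStronglyMeasurable G (volume.restrict (Iic 0)))
    (hGb : ∀ s ≤ 0, ‖G s‖ ≤ A * exp (β * s)) (a : ℝ) {b : ℝ} (hb : b ≤ 0) :
    IntegrableOn (fun s => U s (G s)) (Icc a b) := by
  have hsub : Icc a b ⊆ Iic 0 := fun s hs => hs.2.trans hb
  refine Integrable.mono' (g := fun s => ‖U s‖ * (A * exp (β * s)))
    (by fun_prop : Continuous _).integrableOn_Icc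
    ((ContinuousLinearMap.id ℝ (V →L[ℝ] V)).aestronglyMeasurable_comp₂
      hU.aestronglyMeasurable (hG.mono_set hsub)) ?_
  filter_upwards [ae_restrict_mem measurableSet_Icc] with s hs
  exact (U s).le_opNorm_of_le (hGb s (hsub hs))

theorem norm_intervalIntegral_apply_sub_le
    (hUb : ∀ τ ≤ 0, ∀ v, ‖U τ v‖ ≤ exp (ω * τ) * ‖v‖) (hβω : β < ω)
    (hGb : ∀ s ≤ 0, ‖G s‖ ≤ A * exp (β * s)) (ht : t ≤ 0) :
    ‖∫ s in 0..t, U (t - s) (G s)‖ ≤ A / (ω - β) * exp (β * t) := by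
  have hA : 0 ≤ A := by simpa using (norm_nonneg _).trans (hGb 0 le_rfl)
  have hb : IntegrableOn (fun s => A * exp (ω * t) * exp ((β - ω) * s)) (Ioi t) :=
    (integrableOn_exp_mul_Ioi (by linarith) t).const_mul _
  rw [intervalIntegral.integral_of_ge ht, norm_neg]
  calc ‖∫ s in Ioc t 0, U (t - s) (G s)‖
      ≤ ∫ s in Ioc t 0, A * exp (ω * t) * exp ((β - ω) * s) :=
        norm_integral_le_of_norm_le (hb.mono_set Ioc_subset_Ioi_self) <|
          (ae_restrict_mem measurableSet_Ioc).mono fun s hs =>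
            (hUb _ (by linarith [hs.1]) _).trans (exp_mul_sub_mul_le (hGb s hs.2))
    _ ≤ ∫ s in Ioi t, A * exp (ω * t) * exp ((β - ω) * s) :=
        setIntegral_mono_set hb (ae_of_all _ fun s => by positivity)
          Ioc_subset_Ioi_self.eventuallyLE
    _ = A / (ω - β) * exp (β * t) := by
        rw [integral_const_mul, integral_exp_mul_Ioi (by linarith), mul_assoc, mul_div_assoc',
          mul_neg, ← exp_add, neg_div, ← div_neg, neg_sub]
        ring_nf

theorem integrableOn_Iic_apply_sub (hU : Continuous U)
    (hUb : ∀ τ ≥ 0, ∀ v, ‖U τ v‖ ≤ exp (ω * τ) * ‖v‖) (hωβ : ω < β)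
    (hG : AEStronglyMeasurable G (volume.restrict (Iic 0)))
    (hGb : ∀ s ≤ 0, ‖G s‖ ≤ A * exp (β * s)) (ht : t ≤ 0) :
    IntegrableOn (fun s => U (t - s) (G s)) (Iic t) := by
  refine Integrable.mono' ((integrableOn_exp_mul_Iic (sub_pos.2 hωβ) t).const_mul
      (A * exp (ω * t)))
    ((ContinuousLinearMap.id ℝ (V →L[ℝ] V)).aestronglyMeasurable_comp₂
      (by fun_prop : Continuous fun s => U (t - s)).aestronglyMeasurable
      (hG.mono_set (Iic_subset_Iic.2 ht))) ?_
  filter_upwards [ae_restrict_mem measurableSet_Iic] with s (hs : s ≤ t)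
  exact (hUb _ (sub_nonneg.2 hs) _).trans (exp_mul_sub_mul_le (hGb s (hs.trans ht)))

theorem norm_setIntegral_Iic_apply_sub_le
    (hUb : ∀ τ ≥ 0, ∀ v, ‖U τ v‖ ≤ exp (ω * τ) * ‖v‖) (hωβ : ω < β)
    (hGb : ∀ s ≤ 0, ‖G s‖ ≤ A * exp (β * s)) (ht : t ≤ 0) :
    ‖∫ s in Iic t, U (t - s) (G s)‖ ≤ A / (β - ω) * exp (β * t) :=
  calc ‖∫ s in Iic t, U (t - s) (G s)‖
      ≤ ∫ s in Iic t, A * exp (ω * t) * exp ((β - ω) * s) :=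
        norm_integral_le_of_norm_le
          ((integrableOn_exp_mul_Iic (sub_pos.2 hωβ) t).const_mul _) <|
          (ae_restrict_mem measurableSet_Iic).mono fun s (hs : s ≤ t) =>
            (hUb _ (sub_nonneg.2 hs) _).trans (exp_mul_sub_mul_le (hGb s (hs.trans ht)))
    _ = A / (β - ω) * exp (β * t) := by
        rw [integral_const_mul, integral_exp_mul_Iic (sub_pos.2 hωβ), mul_assoc,
          mul_div_assoc', ← exp_add]
        ring_nf

theorem continuousOn_primitive_Iic {k : ℝ → V} {b : ℝ} (hk : ∀ a, IntegrableOn k (Icc a b)) :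
    ContinuousOn (fun t => ∫ s in b..t, k s) (Iic b) := by
  refine continuousOn_of_locally_continuousOn fun t ht => ⟨Ioi (t - 1), isOpen_Ioi, by simp, ?_⟩
  have hle : t - 1 ≤ b := by linarith [show t ≤ b from ht]
  refine (intervalIntegral.continuousOn_primitive_interval (b := t - 1) ?_).mono ?_
  · rw [uIcc_of_ge hle]; exact hk _
  · rw [uIcc_of_ge hle]; exact fun s hs => ⟨hs.2.le, hs.1⟩

theorem apply_sub_eq_apply_apply_neg (hmul : ∀ a b, U (a + b) = U a * U b) (t s : ℝ) (v : V) :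
    U (t - s) v = U t (U (-s) v) := by
  rw [sub_eq_add_neg, hmul]; rfl

variable [CompleteSpace V]

theorem continuousOn_intervalIntegral_apply_sub (hU : Continuous U)
    (hmul : ∀ a b, U (a + b) = U a * U b)
    (hG : AEStronglyMeasurable G (volume.restrict (Iic 0)))
    (hGb : ∀ s ≤ 0, ‖G s‖ ≤ A * exp (β * s)) :
    ContinuousOn (fun t => ∫ s in 0..t, U (t - s) (G s)) (Iic 0) := by
  have hk (a : ℝ) : IntegrableOn (fun s => U (-s) (G s)) (Icc a 0) :=
    integrableOn_Icc_apply_of_norm_le (hU.comp continuous_neg) hG hGb a le_rfl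
  refine (hU.continuousOn.clm_apply (continuousOn_primitive_Iic hk)).congr fun t ht => ?_
  have hkt : IntervalIntegrable (fun s => U (-s) (G s)) volume 0 t :=
    ((intervalIntegrable_iff_integrableOn_Icc_of_le ht).2 (hk t)).symm
  simp only [apply_sub_eq_apply_apply_neg hmul t]
  exact (U t).intervalIntegral_comp_comm hkt

theorem continuousOn_setIntegral_Iic_apply_sub (hU : Continuous U)
    (hmul : ∀ a b, U (a + b) = U a * U b)
    (hUb : ∀ τ ≥ 0, ∀ v, ‖U τ v‖ ≤ exp (ω * τ) * ‖v‖) (hωβ : ω < β)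
    (hG : AEStronglyMeasurable G (volume.restrict (Iic 0)))
    (hGb : ∀ s ≤ 0, ‖G s‖ ≤ A * exp (β * s)) :
    ContinuousOn (fun t => ∫ s in Iic t, U (t - s) (G s)) (Iic 0) := by
  have hk (t : ℝ) (ht : t ≤ 0) : IntegrableOn (fun s => U (-s) (G s)) (Iic t) := by
    simpa using (integrableOn_Iic_apply_sub hU hUb hωβ hG hGb le_rfl).mono_set (Iic_subset_Iic.2 ht)
  refine (hU.continuousOn.clm_apply ((continuousOn_const (c := ∫ s in Iic 0, U (-s) (G s))).add
    (continuousOn_primitive_Iic fun a => (hk 0 le_rfl).mono_set Icc_subset_Iic_self))).congr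
    fun t ht => ?_
  simp only [apply_sub_eq_apply_apply_neg hmul t]
  rw [Pi.add_apply, ← intervalIntegral.integral_Iic_sub_Iic (hk 0 le_rfl) (hk t ht), add_sub_cancel,
    (U t).integral_comp_comm (hk t ht)]

end Propagator

section OperatorExponential

variable {V : Type*} [NormedAddCommGroup V] [NormedSpace ℝ V] [CompleteSpace V]

theorem continuous_exp_smul (T : V →L[ℝ] V) : Continuous fun τ : ℝ => NormedSpace.exp (τ • T) := by
  let : NormedAlgebra ℚ (V →L[ℝ] V) := NormedAlgebra.restrictScalars ℚ ℝ _
  fun_prop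

theorem exp_add_smul (T : V →L[ℝ] V) (a b : ℝ) :
    NormedSpace.exp ((a + b) • T) = NormedSpace.exp (a • T) * NormedSpace.exp (b • T) := by
  let : NormedAlgebra ℚ (V →L[ℝ] V) := NormedAlgebra.restrictScalars ℚ ℝ _
  rw [add_smul, NormedSpace.exp_add_of_commute (((Commute.refl T).smul_left a).smul_right b)]

end OperatorExponential

section LyapunovPerron

variable {V W : Type*} {A β : ℝ} {x : ℝ → V} {y : ℝ → W}

theorem LPslow_integrable_memCneg_and_negNorm_le
    [NormedAddCommGroup V] [NormedSpace ℝ V] [CompleteSpace V]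
    (S : V →L[ℝ] V) {γs : ℝ}
    (hS : ∀ t ≤ (0:ℝ), ∀ v : V, ‖NormedSpace.exp (t • S) v‖ ≤ exp (γs * t) * ‖v‖) (hβ : β < γs)
    (g1 : ℝ → V → W → V) (x0 : V)
    (hG : AEStronglyMeasurable (fun s => g1 s (x s) (y s)) (volume.restrict (Iic 0)))
    (hGb : ∀ s ≤ 0, ‖g1 s (x s) (y s)‖ ≤ A * exp (β * s)) :
    (∀ t ≤ (0:ℝ), IntervalIntegrable
        (fun s => NormedSpace.exp ((t - s) • S) (g1 s (x s) (y s))) volume 0 t) ∧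
      MemCneg β (LPslow S g1 x0 x y) ∧ negNorm β (LPslow S g1 x0 x y) ≤ ‖x0‖ + A / (γs - β) := by
  have hU := continuous_exp_smul S
  refine ⟨fun t ht => ((intervalIntegrable_iff_integrableOn_Icc_of_le ht).2 <|
    integrableOn_Icc_apply_of_norm_le (U := fun s => NormedSpace.exp ((t - s) • S))
      (hU.comp (continuous_const.sub continuous_id)) hG hGb t le_rfl).symm, ?_⟩
  refine memCneg_and_negNorm_le ((hU.clm_apply continuous_const).continuousOn.add
    (continuousOn_intervalIntegral_apply_sub hU (exp_add_smul S) hG hGb)) fun t ht => ?_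
  have hexp : exp (γs * t) ≤ exp (β * t) := exp_le_exp.2 (by nlinarith)
  calc ‖LPslow S g1 x0 x y t‖
      ≤ exp (γs * t) * ‖x0‖ + A / (γs - β) * exp (β * t) :=
        (norm_add_le _ _).trans
          (add_le_add (hS t ht x0) (norm_intervalIntegral_apply_sub_le hS hβ hGb ht))
    _ ≤ (‖x0‖ + A / (γs - β)) * exp (β * t) := by
        rw [add_mul, mul_comm ‖x0‖]; gcongr

theorem LPfast_integrable_memCneg_and_negNorm_le
    [NormedAddCommGroup W] [NormedSpace ℝ W] [CompleteSpace W]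
    (F : W →L[ℝ] W) {γf ε : ℝ} (hε : 0 < ε)
    (hF : ∀ t ≥ (0:ℝ), ∀ w : W, ‖NormedSpace.exp (t • F) w‖ ≤ exp (γf * t) * ‖w‖)
    (hβ : γf / ε < β) (g2 : ℝ → V → W → W)
    (hG : AEStronglyMeasurable (fun s => g2 s (x s) (y s)) (volume.restrict (Iic 0)))
    (hGb : ∀ s ≤ 0, ‖g2 s (x s) (y s)‖ ≤ A * exp (β * s)) :
    (∀ t ≤ (0:ℝ), IntegrableOn
        (fun s => NormedSpace.exp (((t - s) / ε) • F) (g2 s (x s) (y s))) (Iic t)) ∧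
      MemCneg β (LPfast F g2 ε x y) ∧ negNorm β (LPfast F g2 ε x y) ≤ A / (ε * β - γf) := by
  set U : ℝ → W →L[ℝ] W := fun τ => NormedSpace.exp ((τ / ε) • F)
  have hU : Continuous U := (continuous_exp_smul F).comp (by fun_prop)
  have hmul (a b : ℝ) : U (a + b) = U a * U b := by simp only [U, add_div, exp_add_smul]
  have hUb (τ : ℝ) (hτ : τ ≥ 0) (v : W) : ‖U τ v‖ ≤ exp (γf / ε * τ) * ‖v‖ := by
    rw [div_mul_eq_mul_div, mul_div_assoc]
    exact hF _ (div_nonneg hτ hε.le) v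
  refine ⟨fun t ht => integrableOn_Iic_apply_sub hU hUb hβ hG hGb ht, ?_⟩
  refine memCneg_and_negNorm_le
    ((continuousOn_setIntegral_Iic_apply_sub hU hmul hUb hβ hG hGb).const_smul (1 / ε))
    fun t ht => ?_
  calc ‖LPfast F g2 ε x y t‖ = 1 / ε * ‖∫ s in Iic t, U (t - s) (g2 s (x s) (y s))‖ := by
        rw [LPfast, norm_smul, Real.norm_of_nonneg (by positivity)]
    _ ≤ 1 / ε * (A / (β - γf / ε) * exp (β * t)) := by
        gcongr; exact norm_setIntegral_Iic_apply_sub_le hUb hβ hGb ht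
    _ = A / (ε * β - γf) * exp (β * t) := by
        rw [← mul_assoc, one_div_mul_eq_div, div_div, sub_mul, div_mul_cancel₀ _ hε.ne', mul_comm β]

end LyapunovPerron

theorem lyapunovPerron_maps_into_and_bound_general
    {E₁ E₂ : Type*}
    [NormedAddCommGroup E₁] [NormedSpace ℝ E₁] [FiniteDimensional ℝ E₁] [MeasurableSpace E₁] [BorelSpace E₁]
    [NormedAddCommGroup E₂] [NormedSpace ℝ E₂] [FiniteDimensional ℝ E₂] [MeasurableSpace E₂] [BorelSpace E₂]
    (S : E₁ →L[ℝ] E₁) (F : E₂ →L[ℝ] E₂)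
    (γs γf γ K ε : ℝ)
    (hγs : 0 < γs) (hγ : 0 < γ) (hK : 0 < K)
    (hgap : K < -(γ + γf)) (hε : 0 < ε)
    (hS : ∀ t ≤ (0:ℝ), ∀ x : E₁, ‖NormedSpace.exp (t • S) x‖ ≤ Real.exp (γs * t) * ‖x‖)
    (hF : ∀ t ≥ (0:ℝ), ∀ y : E₂, ‖NormedSpace.exp (t • F) y‖ ≤ Real.exp (γf * t) * ‖y‖)
    (g1 : ℝ → E₁ → E₂ → E₁) (g2 : ℝ → E₁ → E₂ → E₂)
    (hg1m : ∀ x y, Measurable fun t => g1 t x y)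
    (hg2m : ∀ x y, Measurable fun t => g2 t x y)
    (hg1l : ∀ t x₁ y₁ x₂ y₂, ‖g1 t x₁ y₁ - g1 t x₂ y₂‖ ≤ K * (‖x₁ - x₂‖ + ‖y₁ - y₂‖))
    (hg2l : ∀ t x₁ y₁ x₂ y₂, ‖g2 t x₁ y₁ - g2 t x₂ y₂‖ ≤ K * (‖x₁ - x₂‖ + ‖y₁ - y₂‖))
    (hg0 : ∃ M, ∀ t ≤ (0:ℝ),
      Real.exp ((γ/ε) * t) * (‖g1 t 0 0‖ + ‖g2 t 0 0‖) ≤ M)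
    :
    ∀ x0 : E₁, ∃ C₃ : ℝ, 0 ≤ C₃ ∧
      ∀ (xh : ℝ → E₁) (yh : ℝ → E₂),
        MemCneg (-γ/ε) xh → MemCneg (-γ/ε) yh →
        (∀ t ≤ (0:ℝ), IntervalIntegrable
            (fun s => NormedSpace.exp ((t - s) • S) (g1 s (xh s) (yh s))) volume 0 t) ∧
        (∀ t ≤ (0:ℝ), IntegrableOn
            (fun s => NormedSpace.exp (((t - s)/ε) • F) (g2 s (xh s) (yh s))) (Set.Iic t)) ∧
        MemCneg (-γ/ε) (LPslow S g1 x0 xh yh) ∧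
        MemCneg (-γ/ε) (LPfast F g2 ε xh yh) ∧
        negNorm (-γ/ε) (LPslow S g1 x0 xh yh) + negNorm (-γ/ε) (LPfast F g2 ε xh yh) ≤
          (ε * K / (γ + ε * γs) - K / (γ + γf)) * (negNorm (-γ/ε) xh + negNorm (-γ/ε) yh) + C₃ := by
  intro x0
  obtain ⟨M, hM⟩ := hg0
  have hg00 (t : ℝ) (ht : t ≤ 0) : ‖g1 t 0 0‖ + ‖g2 t 0 0‖ ≤ M * exp (-γ / ε * t) :=
    exp_neg_mul_mul_le_iff.1 (by rw [neg_div, neg_neg]; exact hM t ht)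
  have hM0 : 0 ≤ M := by simpa using (by positivity : (0 : ℝ) ≤ _).trans (hg00 0 le_rfl)
  have hγγf : γ + γf < 0 := by linarith
  have hslow : γs - -γ / ε = (γ + ε * γs) / ε := by field_simp; ring
  have hfast : ε * (-γ / ε) - γf = -(γ + γf) := by field_simp; ring
  refine ⟨‖x0‖ + M * (ε / (γ + ε * γs) - 1 / (γ + γf)), add_nonneg (norm_nonneg _) (mul_nonneg hM0
    (sub_nonneg.2 ((one_div_neg.2 hγγf).le.trans (by positivity)))), fun xh yh hx hy => ?_⟩
  set A := M + K * (negNorm (-γ / ε) xh + negNorm (-γ / ε) yh)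
  have hb1 (s : ℝ) (hs : s ≤ 0) : ‖g1 s (xh s) (yh s)‖ ≤ A * exp (-γ / ε * s) :=
    norm_comp_le_of_memCneg hg1l hK.le
      (fun t ht => (le_add_of_nonneg_right (norm_nonneg _)).trans (hg00 t ht)) hx hy hs
  have hb2 (s : ℝ) (hs : s ≤ 0) : ‖g2 s (xh s) (yh s)‖ ≤ A * exp (-γ / ε * s) :=
    norm_comp_le_of_memCneg hg2l hK.le
      (fun t ht => (le_add_of_nonneg_left (norm_nonneg _)).trans (hg00 t ht)) hx hy hs
  obtain ⟨hint1, hmem1, hnorm1⟩ := LPslow_integrable_memCneg_and_negNorm_le S hS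
    (sub_pos.1 (by rw [hslow]; positivity)) g1 x0
    (aestronglyMeasurable_comp_of_lipschitz hg1m hg1l measurableSet_Iic hx.1 hy.1) hb1
  obtain ⟨hint2, hmem2, hnorm2⟩ := LPfast_integrable_memCneg_and_negNorm_le F hε hF
    (by rw [div_lt_div_iff_of_pos_right hε]; linarith) g2
    (aestronglyMeasurable_comp_of_lipschitz hg2m hg2l measurableSet_Iic hx.1 hy.1) hb2
  refine ⟨hint1, hint2, hmem1, hmem2, ?_⟩
  rw [hslow] at hnorm1
  rw [hfast] at hnorm2
  calc _ ≤ ‖x0‖ + A / ((γ + ε * γs) / ε) + A / -(γ + γf) := by linarith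
    _ = _ := by simp only [A]; field_simp; ring

/-- The Lyapunov–Perron operator maps `C_β^-` into itself, its defining
integrals converge, and `‖I^ε_{x₀}(φ)‖ ≤ ρ(ε) ‖φ‖ + C₃` with `C₃` independent of `φ`. -/
theorem lyapunovPerron_maps_into_and_bound
    {E₁ E₂ : Type*}
    [NormedAddCommGroup E₁] [NormedSpace ℝ E₁] [FiniteDimensional ℝ E₁] [MeasurableSpace E₁] [BorelSpace E₁]
    [NormedAddCommGroup E₂] [NormedSpace ℝ E₂] [FiniteDimensional ℝ E₂] [MeasurableSpace E₂] [BorelSpace E₂]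
    (S : E₁ →L[ℝ] E₁) (F : E₂ →L[ℝ] E₂)
    (γs γf γ K ε : ℝ)
    (hγs : 0 < γs) (hγf : γf < 0) (hγ : 0 < γ) (hK : 0 < K)
    (hgap : K < -(γ + γf)) (hε : 0 < ε)
    (hS : ∀ t ≤ (0:ℝ), ∀ x : E₁, ‖NormedSpace.exp (t • S) x‖ ≤ Real.exp (γs * t) * ‖x‖)
    (hF : ∀ t ≥ (0:ℝ), ∀ y : E₂, ‖NormedSpace.exp (t • F) y‖ ≤ Real.exp (γf * t) * ‖y‖)
    (g1 : ℝ → E₁ → E₂ → E₁) (g2 : ℝ → E₁ → E₂ → E₂)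
    (hg1m : ∀ x y, Measurable fun t => g1 t x y)
    (hg2m : ∀ x y, Measurable fun t => g2 t x y)
    (hg1b : ∀ x y r, ∃ M, ∀ t : ℝ, |t| ≤ r → ‖g1 t x y‖ ≤ M)
    (hg2b : ∀ x y r, ∃ M, ∀ t : ℝ, |t| ≤ r → ‖g2 t x y‖ ≤ M)
    (hg1l : ∀ t x₁ y₁ x₂ y₂, ‖g1 t x₁ y₁ - g1 t x₂ y₂‖ ≤ K * (‖x₁ - x₂‖ + ‖y₁ - y₂‖))
    (hg2l : ∀ t x₁ y₁ x₂ y₂, ‖g2 t x₁ y₁ - g2 t x₂ y₂‖ ≤ K * (‖x₁ - x₂‖ + ‖y₁ - y₂‖))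
    (hg0 : ∃ M, ∀ t ≤ (0:ℝ),
      Real.exp ((γ/ε) * t) * (‖g1 t 0 0‖ + ‖g2 t 0 0‖) ≤ M)
    :
    ∀ x0 : E₁, ∃ C₃ : ℝ, 0 ≤ C₃ ∧
      ∀ (xh : ℝ → E₁) (yh : ℝ → E₂),
        MemCneg (-γ/ε) xh → MemCneg (-γ/ε) yh →
        (∀ t ≤ (0:ℝ), IntervalIntegrable
            (fun s => NormedSpace.exp ((t - s) • S) (g1 s (xh s) (yh s))) volume 0 t) ∧
        (∀ t ≤ (0:ℝ), IntegrableOn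
            (fun s => NormedSpace.exp (((t - s)/ε) • F) (g2 s (xh s) (yh s))) (Set.Iic t)) ∧
        MemCneg (-γ/ε) (LPslow S g1 x0 xh yh) ∧
        MemCneg (-γ/ε) (LPfast F g2 ε xh yh) ∧
        negNorm (-γ/ε) (LPslow S g1 x0 xh yh) + negNorm (-γ/ε) (LPfast F g2 ε xh yh) ≤
          (ε * K / (γ + ε * γs) - K / (γ + γf)) * (negNorm (-γ/ε) xh + negNorm (-γ/ε) yh) + C₃ :=
  lyapunovPerron_maps_into_and_bound_general S F γs γf γ K ε hγs hγ hK hgap hε hS hF g1 g2 hg1m hg2m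
    hg1l hg2l hg0
end
end

section
/- For every x₀ ∈ E₁ and all φ₁, φ₂ ∈ C_β^−(E₁ × E₂), the Lyapunov–Perron operator satisfies ‖I^ε_{x₀}(φ₁) − I^ε_{x₀}(φ₂)‖_{C_β^−} ≤ ρ(ε)·‖φ₁ − φ₂‖_{C_β^−}. -/
open MeasureTheory Real Filter

noncomputable section

variable {E₁ E₂ : Type*}
  [NormedAddCommGroup E₁] [NormedSpace ℝ E₁]
  [NormedAddCommGroup E₂] [NormedSpace ℝ E₂]

/-!
Fix `t ≤ 0` and write `β = -γ/ε` and `N` for the `C_β^-` distance of the two arguments. By the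
Lipschitz bound the difference of the nonlinearities at time `s ≤ 0` has norm at most `K N e^{βs}`.
In the slow component it is integrated over `[t, 0]` against a kernel of norm at most
`e^{γ_s (t - s)}`, which gives `K N e^{βt} / (γ_s - β) = ε K N e^{βt} / (γ + ε γ_s)`. In the fast
component it is integrated over `(-∞, t]` against a kernel of norm at most `e^{γ_f (t - s) / ε}`;
the gap `γ_f < εβ = -γ` makes this converge, and with the prefactor `1/ε` it gives
`K N e^{βt} / (εβ - γ_f) = -K N e^{βt} / (γ + γ_f)`.

For the difference of two integrals to be the integral of the difference, each integrand must be
integrable: it is measurable because `g` is measurable in time and continuous in the state, and it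
is dominated because `g(t, 0, 0)` grows at most like `e^{βt}`.
-/

open Set

theorem continuous_normedSpace_exp (𝕂 : Type*) [RCLike 𝕂] {𝔸 : Type*} [NormedRing 𝔸]
    [NormedAlgebra 𝕂 𝔸] [CompleteSpace 𝔸] : Continuous (NormedSpace.exp : 𝔸 → 𝔸) :=
  continuous_iff_continuousAt.2 fun x => (NormedSpace.exp_analytic (𝕂 := 𝕂) x).continuousAt

theorem le_mul_exp_of_exp_neg_mul_le {a β M s : ℝ} (h : exp (-β * s) * a ≤ M) :
    a ≤ M * exp (β * s) := by
  have := mul_le_mul_of_nonneg_right h (exp_pos (β * s)).le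
  rwa [mul_right_comm, ← exp_add, neg_mul, neg_add_cancel, exp_zero, one_mul] at this

section WeightedSpace

variable {E : Type*} [NormedAddCommGroup E] {β C : ℝ} {φ ψ : ℝ → E}

theorem negNorm_nonneg : 0 ≤ negNorm β φ :=
  Real.iSup_nonneg fun _ => by positivity

theorem norm_le_negNorm_mul_exp (hφ : MemCneg β φ) {s : ℝ} (hs : s ≤ 0) :
    ‖φ s‖ ≤ negNorm β φ * exp (β * s) :=
  le_mul_exp_of_exp_neg_mul_le (le_ciSup hφ.2 ⟨s, hs⟩)

theorem negNorm_le_of_norm_le (h : ∀ s ≤ 0, ‖φ s‖ ≤ C * exp (β * s)) : negNorm β φ ≤ C := by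
  refine ciSup_le fun s => ?_
  calc exp (-β * s) * ‖φ s‖ ≤ exp (-β * s) * (C * exp (β * s)) := by gcongr; exact h s s.2
    _ = C := by rw [mul_left_comm, ← exp_add, neg_mul, neg_add_cancel, exp_zero, mul_one]

theorem MemCneg.sub (hφ : MemCneg β φ) (hψ : MemCneg β ψ) :
    MemCneg β (fun t => φ t - ψ t) := by
  obtain ⟨M₁, hM₁⟩ := hφ.2
  obtain ⟨M₂, hM₂⟩ := hψ.2
  refine ⟨hφ.1.sub hψ.1, M₁ + M₂, ?_⟩
  rintro _ ⟨t, rfl⟩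
  calc exp (-β * t) * ‖φ t - ψ t‖ ≤ exp (-β * t) * ‖φ t‖ + exp (-β * t) * ‖ψ t‖ := by
        rw [← mul_add]; gcongr; exact norm_sub_le _ _
    _ ≤ M₁ + M₂ := add_le_add (hM₁ ⟨t, rfl⟩) (hM₂ ⟨t, rfl⟩)

end WeightedSpace

theorem exp_mul_sub_mul_exp (a β t s : ℝ) :
    exp (a * (t - s)) * exp (β * s) = exp (a * t) * exp ((β - a) * s) := by
  rw [← exp_add, ← exp_add]; ring_nf

theorem exp_mul_mul_exp_sub_mul (a β t : ℝ) : exp (a * t) * exp ((β - a) * t) = exp (β * t) := by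
  rw [← exp_add]; ring_nf

section KernelEstimates

variable {E : Type*} [NormedAddCommGroup E] [NormedSpace ℝ E] {f : ℝ → E} {a β C t : ℝ}

theorem norm_intervalIntegral_le_of_norm_le_exp (hβa : β < a) (hC : 0 ≤ C) (ht : t ≤ 0)
    (hf : ∀ s ∈ Ioc t 0, ‖f s‖ ≤ C * (exp (a * (t - s)) * exp (β * s))) :
    ‖∫ s in (0 : ℝ)..t, f s‖ ≤ C / (a - β) * exp (β * t) := by
  have hc : a - β ≠ 0 := sub_ne_zero.2 hβa.ne'
  have hbound : ∫ s in t..0, C * (exp (a * (t - s)) * exp (β * s)) =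
      C / (a - β) * (exp (β * t) - exp (a * t)) := by
    simp_rw [exp_mul_sub_mul_exp]
    rw [intervalIntegral.integral_const_mul, intervalIntegral.integral_const_mul,
      intervalIntegral.integral_comp_mul_left (fun s => exp s) (sub_ne_zero.2 hβa.ne),
      integral_exp, mul_zero, exp_zero, smul_eq_mul, ← exp_mul_mul_exp_sub_mul a β t,
      ← neg_sub a β, inv_neg]
    field_simp
    ring
  rw [intervalIntegral.integral_symm, norm_neg]
  calc ‖∫ s in t..0, f s‖ ≤ ∫ s in t..0, C * (exp (a * (t - s)) * exp (β * s)) :=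
        intervalIntegral.norm_integral_le_of_norm_le ht (ae_of_all _ hf)
          ((by fun_prop : Continuous _).intervalIntegrable _ _)
    _ = C / (a - β) * (exp (β * t) - exp (a * t)) := hbound
    _ ≤ C / (a - β) * exp (β * t) := by
        gcongr
        exact sub_le_self _ (exp_pos _).le

theorem integrableOn_exp_mul_sub_mul_exp_Iic (hβa : a < β) (t : ℝ) :
    IntegrableOn (fun s => exp (a * (t - s)) * exp (β * s)) (Iic t) := by
  simp_rw [exp_mul_sub_mul_exp]
  exact (integrableOn_exp_mul_Iic (sub_pos.2 hβa) t).const_mul _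

theorem norm_setIntegral_Iic_le_of_norm_le_exp (hβa : a < β)
    (hf : ∀ s ≤ t, ‖f s‖ ≤ C * (exp (a * (t - s)) * exp (β * s))) :
    ‖∫ s in Iic t, f s‖ ≤ C / (β - a) * exp (β * t) := by
  have hbound : ∫ s in Iic t, C * (exp (a * (t - s)) * exp (β * s)) =
      C / (β - a) * exp (β * t) := by
    simp_rw [exp_mul_sub_mul_exp]
    rw [integral_const_mul, integral_const_mul, integral_exp_mul_Iic (sub_pos.2 hβa),
      mul_div_assoc', exp_mul_mul_exp_sub_mul]
    ring
  calc ‖∫ s in Iic t, f s‖ ≤ ∫ s in Iic t, C * (exp (a * (t - s)) * exp (β * s)) :=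
        norm_integral_le_of_norm_le ((integrableOn_exp_mul_sub_mul_exp_Iic hβa t).const_mul C)
          ((ae_restrict_iff' measurableSet_Iic).2 (ae_of_all _ hf))
    _ = _ := hbound

end KernelEstimates

def IsLipschitzNonlinearity {X Y Z : Type*} [NormedAddCommGroup X] [NormedAddCommGroup Y]
    [NormedAddCommGroup Z] (K : ℝ) (g : ℝ → X → Y → Z) : Prop :=
  ∀ t x₁ y₁ x₂ y₂, ‖g t x₁ y₁ - g t x₂ y₂‖ ≤ K * (‖x₁ - x₂‖ + ‖y₁ - y₂‖)

namespace IsLipschitzNonlinearity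

variable {X Y Z : Type*} [NormedAddCommGroup X] [NormedAddCommGroup Y] [NormedAddCommGroup Z]
  {K β M : ℝ} {g : ℝ → X → Y → Z}

theorem continuous (hg : IsLipschitzNonlinearity K g) (t : ℝ) :
    Continuous fun p : X × Y => g t p.1 p.2 := by
  refine continuous_iff_continuousAt.2 fun q => tendsto_iff_norm_sub_tendsto_zero.2 ?_
  have hbound : Continuous fun p : X × Y => K * (‖p.1 - q.1‖ + ‖p.2 - q.2‖) := by fun_prop
  exact squeeze_zero (fun _ => norm_nonneg _) (fun p => hg t _ _ _ _)
    (by simpa using hbound.tendsto q)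

theorem norm_le (hg : IsLipschitzNonlinearity K g) (t : ℝ) (x : X) (y : Y) :
    ‖g t x y‖ ≤ ‖g t 0 0‖ + K * (‖x‖ + ‖y‖) := by
  simpa using norm_le_norm_add_norm_sub' (g t x y) (g t 0 0) |>.trans
    (add_le_add_right (hg t x y 0 0) _)

theorem norm_comp_le_mul_exp (hg : IsLipschitzNonlinearity K g) (hK : 0 ≤ K)
    (hg0 : ∀ s ≤ 0, ‖g s 0 0‖ ≤ M * exp (β * s)) {x : ℝ → X} {y : ℝ → Y}
    (hx : MemCneg β x) (hy : MemCneg β y) {s : ℝ} (hs : s ≤ 0) :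
    ‖g s (x s) (y s)‖ ≤ (M + K * (negNorm β x + negNorm β y)) * exp (β * s) := by
  calc ‖g s (x s) (y s)‖ ≤ ‖g s 0 0‖ + K * (‖x s‖ + ‖y s‖) := hg.norm_le s _ _
    _ ≤ M * exp (β * s) + K * (negNorm β x * exp (β * s) + negNorm β y * exp (β * s)) := by
        gcongr
        exacts [hg0 s hs, norm_le_negNorm_mul_exp hx hs, norm_le_negNorm_mul_exp hy hs]
    _ = (M + K * (negNorm β x + negNorm β y)) * exp (β * s) := by ring

theorem norm_comp_sub_comp_le_mul_exp (hg : IsLipschitzNonlinearity K g) (hK : 0 ≤ K)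
    {x₁ x₂ : ℝ → X} {y₁ y₂ : ℝ → Y} (hx : MemCneg β fun t => x₁ t - x₂ t)
    (hy : MemCneg β fun t => y₁ t - y₂ t) {s : ℝ} (hs : s ≤ 0) :
    ‖g s (x₁ s) (y₁ s) - g s (x₂ s) (y₂ s)‖ ≤
      K * (negNorm β (fun t => x₁ t - x₂ t) + negNorm β (fun t => y₁ t - y₂ t)) *
        exp (β * s) := by
  calc _ ≤ K * (‖x₁ s - x₂ s‖ + ‖y₁ s - y₂ s‖) := hg s _ _ _ _
    _ ≤ K * (negNorm β (fun t => x₁ t - x₂ t) * exp (β * s) +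
          negNorm β (fun t => y₁ t - y₂ t) * exp (β * s)) := by
        gcongr
        exacts [norm_le_negNorm_mul_exp hx hs, norm_le_negNorm_mul_exp hy hs]
    _ = _ := by ring

section Measurability

variable [MeasurableSpace X] [BorelSpace X] [SecondCountableTopology X]
  [MeasurableSpace Y] [BorelSpace Y] [SecondCountableTopology Y]
  [MeasurableSpace Z] [BorelSpace Z] [SecondCountableTopology Z]

theorem aestronglyMeasurable_comp (hg : IsLipschitzNonlinearity K g)
    (hgm : ∀ x y, Measurable fun t => g t x y) {x : ℝ → X} {y : ℝ → Y} {A : Set ℝ}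
    (hA : MeasurableSet A) (hx : ContinuousOn x A) (hy : ContinuousOn y A) :
    AEStronglyMeasurable (fun s => g s (x s) (y s)) (volume.restrict A) := by
  have hunc : Measurable (Function.uncurry fun (p : X × Y) (t : ℝ) => g t p.1 p.2) :=
    measurable_uncurry_of_continuous_of_measurable hg.continuous fun p => hgm p.1 p.2
  exact (hunc.comp_aemeasurable (((hx.aemeasurable hA).prodMk (hy.aemeasurable hA)).prodMk
    aemeasurable_id)).aestronglyMeasurable

theorem aestronglyMeasurable_apply_comp [NormedSpace ℝ Z]
    (hg : IsLipschitzNonlinearity K g) (hgm : ∀ x y, Measurable fun t => g t x y)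
    {U : ℝ → Z →L[ℝ] Z} (hU : Continuous U) {x : ℝ → X} {y : ℝ → Y} {A : Set ℝ}
    (hA : MeasurableSet A) (hx : ContinuousOn x A) (hy : ContinuousOn y A) :
    AEStronglyMeasurable (fun s => U s (g s (x s) (y s))) (volume.restrict A) :=
  Continuous.comp_aestronglyMeasurable₂ (g := fun (L : Z →L[ℝ] Z) (z : Z) => L z) (by fun_prop)
    hU.aestronglyMeasurable (hg.aestronglyMeasurable_comp hgm hA hx hy)

theorem integrableOn_apply_comp [NormedSpace ℝ Z]
    (hg : IsLipschitzNonlinearity K g) (hK : 0 ≤ K) (hgm : ∀ x y, Measurable fun t => g t x y)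
    (hg0 : ∀ s ≤ 0, ‖g s 0 0‖ ≤ M * exp (β * s)) {U : ℝ → Z →L[ℝ] Z} (hU : Continuous U)
    {a t : ℝ} {A : Set ℝ} (hA : MeasurableSet A) (hA0 : A ⊆ Iic 0)
    (hUA : ∀ s ∈ A, ∀ z, ‖U s z‖ ≤ exp (a * (t - s)) * ‖z‖)
    (hint : IntegrableOn (fun s => exp (a * (t - s)) * exp (β * s)) A)
    {x : ℝ → X} {y : ℝ → Y} (hx : MemCneg β x) (hy : MemCneg β y) :
    IntegrableOn (fun s => U s (g s (x s) (y s))) A := by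
  set C := M + K * (negNorm β x + negNorm β y)
  refine Integrable.mono' (hint.const_mul C)
    (hg.aestronglyMeasurable_apply_comp hgm hU hA (hx.1.mono hA0) (hy.1.mono hA0))
    ((ae_restrict_iff' hA).2 (ae_of_all _ fun s hs => ?_))
  calc _ ≤ exp (a * (t - s)) * ‖g s (x s) (y s)‖ := hUA s hs _
    _ ≤ exp (a * (t - s)) * (C * exp (β * s)) := by
        gcongr; exact hg.norm_comp_le_mul_exp hK hg0 hx hy (hA0 hs)
    _ = C * (exp (a * (t - s)) * exp (β * s)) := by ring

end Measurability

end IsLipschitzNonlinearity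

theorem negNorm_LPslow_sub_le {E₁ E₂ : Type*}
    [NormedAddCommGroup E₁] [NormedSpace ℝ E₁] [CompleteSpace E₁]
    [MeasurableSpace E₁] [BorelSpace E₁] [SecondCountableTopology E₁]
    [NormedAddCommGroup E₂] [MeasurableSpace E₂] [BorelSpace E₂] [SecondCountableTopology E₂]
    {S : E₁ →L[ℝ] E₁} {g : ℝ → E₁ → E₂ → E₁} {γs K β M : ℝ} (hβ : β < γs)
    (hS : ∀ t ≤ (0 : ℝ), ∀ x : E₁, ‖NormedSpace.exp (t • S) x‖ ≤ exp (γs * t) * ‖x‖)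
    (hg : IsLipschitzNonlinearity K g) (hK : 0 ≤ K) (hgm : ∀ x y, Measurable fun t => g t x y)
    (hg0 : ∀ s ≤ 0, ‖g s 0 0‖ ≤ M * exp (β * s)) (x0 : E₁) {x₁ x₂ : ℝ → E₁} {y₁ y₂ : ℝ → E₂}
    (hx₁ : MemCneg β x₁) (hy₁ : MemCneg β y₁) (hx₂ : MemCneg β x₂) (hy₂ : MemCneg β y₂) :
    negNorm β (fun t => LPslow S g x0 x₁ y₁ t - LPslow S g x0 x₂ y₂ t) ≤
      K / (γs - β) * (negNorm β (fun t => x₁ t - x₂ t) + negNorm β (fun t => y₁ t - y₂ t)) := by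
  set N := negNorm β (fun t => x₁ t - x₂ t) + negNorm β (fun t => y₁ t - y₂ t)
  refine negNorm_le_of_norm_le fun t ht => ?_
  have hS' : ∀ s ∈ Ioc t 0, ∀ z : E₁, ‖NormedSpace.exp ((t - s) • S) z‖ ≤
      exp (γs * (t - s)) * ‖z‖ := fun s hs => hS _ (by linarith [hs.1])
  have hint {x : ℝ → E₁} {y : ℝ → E₂} (hx : MemCneg β x) (hy : MemCneg β y) :
      IntervalIntegrable (fun s => NormedSpace.exp ((t - s) • S) (g s (x s) (y s))) volume 0 t :=
    ((intervalIntegrable_iff_integrableOn_Ioc_of_le ht).2 <|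
      hg.integrableOn_apply_comp hK hgm hg0 ((continuous_normedSpace_exp ℝ).comp (by fun_prop))
        measurableSet_Ioc Ioc_subset_Iic_self hS' (by fun_prop : Continuous _).integrableOn_Ioc
        hx hy).symm
  have hdiff : LPslow S g x0 x₁ y₁ t - LPslow S g x0 x₂ y₂ t =
      ∫ s in (0 : ℝ)..t, NormedSpace.exp ((t - s) • S) (g s (x₁ s) (y₁ s) - g s (x₂ s) (y₂ s)) := by
    simp only [LPslow, map_sub, add_sub_add_left_eq_sub]
    rw [intervalIntegral.integral_sub (hint hx₁ hy₁) (hint hx₂ hy₂)]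
  rw [hdiff]
  refine (norm_intervalIntegral_le_of_norm_le_exp (C := K * N) hβ
    (mul_nonneg hK (add_nonneg negNorm_nonneg negNorm_nonneg)) ht fun s hs => ?_).trans_eq
    (by ring)
  calc _ ≤ exp (γs * (t - s)) * ‖g s (x₁ s) (y₁ s) - g s (x₂ s) (y₂ s)‖ := hS' s hs _
    _ ≤ exp (γs * (t - s)) * (K * N * exp (β * s)) := by
        gcongr; exact hg.norm_comp_sub_comp_le_mul_exp hK (hx₁.sub hx₂) (hy₁.sub hy₂) hs.2
    _ = K * N * (exp (γs * (t - s)) * exp (β * s)) := by ring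

theorem negNorm_LPfast_sub_le {E₁ E₂ : Type*}
    [NormedAddCommGroup E₁] [MeasurableSpace E₁] [BorelSpace E₁] [SecondCountableTopology E₁]
    [NormedAddCommGroup E₂] [NormedSpace ℝ E₂] [CompleteSpace E₂]
    [MeasurableSpace E₂] [BorelSpace E₂] [SecondCountableTopology E₂]
    {F : E₂ →L[ℝ] E₂} {g : ℝ → E₁ → E₂ → E₂} {γf ε K β M : ℝ} (hε : 0 < ε) (hβ : γf < ε * β)
    (hF : ∀ t ≥ (0 : ℝ), ∀ y : E₂, ‖NormedSpace.exp (t • F) y‖ ≤ exp (γf * t) * ‖y‖)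
    (hg : IsLipschitzNonlinearity K g) (hK : 0 ≤ K) (hgm : ∀ x y, Measurable fun t => g t x y)
    (hg0 : ∀ s ≤ 0, ‖g s 0 0‖ ≤ M * exp (β * s)) {x₁ x₂ : ℝ → E₁} {y₁ y₂ : ℝ → E₂}
    (hx₁ : MemCneg β x₁) (hy₁ : MemCneg β y₁) (hx₂ : MemCneg β x₂) (hy₂ : MemCneg β y₂) :
    negNorm β (fun t => LPfast F g ε x₁ y₁ t - LPfast F g ε x₂ y₂ t) ≤
      K / (ε * β - γf) *
        (negNorm β (fun t => x₁ t - x₂ t) + negNorm β (fun t => y₁ t - y₂ t)) := by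
  set N := negNorm β (fun t => x₁ t - x₂ t) + negNorm β (fun t => y₁ t - y₂ t)
  have hβ' : γf / ε < β := (div_lt_iff₀' hε).2 hβ
  refine negNorm_le_of_norm_le fun t ht => ?_
  have hF' : ∀ s ∈ Iic t, ∀ z : E₂, ‖NormedSpace.exp (((t - s) / ε) • F) z‖ ≤
      exp (γf / ε * (t - s)) * ‖z‖ := fun s hs z =>
    (hF _ (div_nonneg (sub_nonneg.2 hs) hε.le) z).trans_eq (by ring_nf)
  have hint {x : ℝ → E₁} {y : ℝ → E₂} (hx : MemCneg β x) (hy : MemCneg β y) :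
      IntegrableOn (fun s => NormedSpace.exp (((t - s) / ε) • F) (g s (x s) (y s))) (Iic t) :=
    hg.integrableOn_apply_comp hK hgm hg0 ((continuous_normedSpace_exp ℝ).comp (by fun_prop))
      measurableSet_Iic (Iic_subset_Iic.2 ht) hF' (integrableOn_exp_mul_sub_mul_exp_Iic hβ' t)
      hx hy
  have hdiff : LPfast F g ε x₁ y₁ t - LPfast F g ε x₂ y₂ t = (1 / ε) •
      ∫ s in Iic t, NormedSpace.exp (((t - s) / ε) • F)
        (g s (x₁ s) (y₁ s) - g s (x₂ s) (y₂ s)) := by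
    simp only [LPfast, map_sub, ← smul_sub]
    rw [integral_sub (hint hx₁ hy₁) (hint hx₂ hy₂)]
  have hbound := norm_setIntegral_Iic_le_of_norm_le_exp (C := K * N) hβ' fun s hs => calc
    _ ≤ exp (γf / ε * (t - s)) * ‖g s (x₁ s) (y₁ s) - g s (x₂ s) (y₂ s)‖ := hF' s hs _
    _ ≤ exp (γf / ε * (t - s)) * (K * N * exp (β * s)) := by
        gcongr
        exact hg.norm_comp_sub_comp_le_mul_exp hK (hx₁.sub hx₂) (hy₁.sub hy₂) (hs.trans ht)
    _ = K * N * (exp (γf / ε * (t - s)) * exp (β * s)) := by ring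
  have hεβ : ε * β - γf ≠ 0 := (sub_pos.2 hβ).ne'
  rw [hdiff, norm_smul, norm_div, norm_one, Real.norm_of_nonneg hε.le]
  calc _ ≤ 1 / ε * (K * N / (β - γf / ε) * exp (β * t)) := by gcongr
    _ = K / (ε * β - γf) * N * exp (β * t) := by field_simp

theorem lyapunovPerron_lipschitz_general
    {E₁ E₂ : Type*}
    [NormedAddCommGroup E₁] [NormedSpace ℝ E₁] [FiniteDimensional ℝ E₁] [MeasurableSpace E₁] [BorelSpace E₁]
    [NormedAddCommGroup E₂] [NormedSpace ℝ E₂] [FiniteDimensional ℝ E₂] [MeasurableSpace E₂] [BorelSpace E₂]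
    (S : E₁ →L[ℝ] E₁) (F : E₂ →L[ℝ] E₂)
    (γs γf γ K ε : ℝ)
    (hγs : 0 < γs) (hγ : 0 < γ) (hK : 0 < K)
    (hgap : K < -(γ + γf)) (hε : 0 < ε)
    (hS : ∀ t ≤ (0:ℝ), ∀ x : E₁, ‖NormedSpace.exp (t • S) x‖ ≤ Real.exp (γs * t) * ‖x‖)
    (hF : ∀ t ≥ (0:ℝ), ∀ y : E₂, ‖NormedSpace.exp (t • F) y‖ ≤ Real.exp (γf * t) * ‖y‖)
    (g1 : ℝ → E₁ → E₂ → E₁) (g2 : ℝ → E₁ → E₂ → E₂)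
    (hg1m : ∀ x y, Measurable fun t => g1 t x y)
    (hg2m : ∀ x y, Measurable fun t => g2 t x y)
    (hg1l : ∀ t x₁ y₁ x₂ y₂, ‖g1 t x₁ y₁ - g1 t x₂ y₂‖ ≤ K * (‖x₁ - x₂‖ + ‖y₁ - y₂‖))
    (hg2l : ∀ t x₁ y₁ x₂ y₂, ‖g2 t x₁ y₁ - g2 t x₂ y₂‖ ≤ K * (‖x₁ - x₂‖ + ‖y₁ - y₂‖))
    (hg0 : ∃ M, ∀ t ≤ (0:ℝ),
      Real.exp ((γ/ε) * t) * (‖g1 t 0 0‖ + ‖g2 t 0 0‖) ≤ M)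
    :
    ∀ (x0 : E₁) (xh₁ : ℝ → E₁) (yh₁ : ℝ → E₂) (xh₂ : ℝ → E₁) (yh₂ : ℝ → E₂),
      MemCneg (-γ/ε) xh₁ → MemCneg (-γ/ε) yh₁ →
      MemCneg (-γ/ε) xh₂ → MemCneg (-γ/ε) yh₂ →
      negNorm (-γ/ε) (fun t => LPslow S g1 x0 xh₁ yh₁ t - LPslow S g1 x0 xh₂ yh₂ t) +
        negNorm (-γ/ε) (fun t => LPfast F g2 ε xh₁ yh₁ t - LPfast F g2 ε xh₂ yh₂ t) ≤
      (ε * K / (γ + ε * γs) - K / (γ + γf)) *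
        (negNorm (-γ/ε) (fun t => xh₁ t - xh₂ t) + negNorm (-γ/ε) (fun t => yh₁ t - yh₂ t)) := by
  intro x0 xh₁ yh₁ xh₂ yh₂ hx₁ hy₁ hx₂ hy₂
  obtain ⟨M, hM⟩ := hg0
  simp only [show ∀ s, γ / ε * s = -(-γ / ε) * s from fun s => by ring] at hM
  have hg10 : ∀ s ≤ (0 : ℝ), ‖g1 s 0 0‖ ≤ M * exp (-γ / ε * s) := fun s hs =>
    le_mul_exp_of_exp_neg_mul_le <|
      le_trans (by gcongr; exact le_add_of_nonneg_right (norm_nonneg _)) (hM s hs)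
  have hg20 : ∀ s ≤ (0 : ℝ), ‖g2 s 0 0‖ ≤ M * exp (-γ / ε * s) := fun s hs =>
    le_mul_exp_of_exp_neg_mul_le <|
      le_trans (by gcongr; exact le_add_of_nonneg_left (norm_nonneg _)) (hM s hs)
  have hεβ : ε * (-γ / ε) = -γ := mul_div_cancel₀ _ hε.ne'
  have hslow := negNorm_LPslow_sub_le ((div_neg_of_neg_of_pos (neg_neg_of_pos hγ) hε).trans hγs)
    hS hg1l hK.le hg1m hg10 x0 hx₁ hy₁ hx₂ hy₂
  have hfast := negNorm_LPfast_sub_le hε (by linarith) hF hg2l hK.le hg2m hg20 hx₁ hy₁ hx₂ hy₂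
  rw [hεβ] at hfast
  have hslow_rate : K / (γs - -γ / ε) = ε * K / (γ + ε * γs) := by
    have : γ + ε * γs ≠ 0 := by positivity
    rw [neg_div, sub_neg_eq_add]
    field_simp
    ring
  calc _ ≤ _ := add_le_add hslow hfast
    _ = _ := by
      rw [hslow_rate, show -γ - γf = -(γ + γf) by ring, div_neg]
      ring

/-- The Lyapunov–Perron operator is `ρ(ε)`-Lipschitz on `C_β^-`. -/
theorem lyapunovPerron_lipschitz
    {E₁ E₂ : Type*}
    [NormedAddCommGroup E₁] [NormedSpace ℝ E₁] [FiniteDimensional ℝ E₁] [MeasurableSpace E₁] [BorelSpace E₁]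
    [NormedAddCommGroup E₂] [NormedSpace ℝ E₂] [FiniteDimensional ℝ E₂] [MeasurableSpace E₂] [BorelSpace E₂]
    (S : E₁ →L[ℝ] E₁) (F : E₂ →L[ℝ] E₂)
    (γs γf γ K ε : ℝ)
    (hγs : 0 < γs) (hγf : γf < 0) (hγ : 0 < γ) (hK : 0 < K)
    (hgap : K < -(γ + γf)) (hε : 0 < ε)
    (hS : ∀ t ≤ (0:ℝ), ∀ x : E₁, ‖NormedSpace.exp (t • S) x‖ ≤ Real.exp (γs * t) * ‖x‖)
    (hF : ∀ t ≥ (0:ℝ), ∀ y : E₂, ‖NormedSpace.exp (t • F) y‖ ≤ Real.exp (γf * t) * ‖y‖)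
    (g1 : ℝ → E₁ → E₂ → E₁) (g2 : ℝ → E₁ → E₂ → E₂)
    (hg1m : ∀ x y, Measurable fun t => g1 t x y)
    (hg2m : ∀ x y, Measurable fun t => g2 t x y)
    (hg1b : ∀ x y r, ∃ M, ∀ t : ℝ, |t| ≤ r → ‖g1 t x y‖ ≤ M)
    (hg2b : ∀ x y r, ∃ M, ∀ t : ℝ, |t| ≤ r → ‖g2 t x y‖ ≤ M)
    (hg1l : ∀ t x₁ y₁ x₂ y₂, ‖g1 t x₁ y₁ - g1 t x₂ y₂‖ ≤ K * (‖x₁ - x₂‖ + ‖y₁ - y₂‖))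
    (hg2l : ∀ t x₁ y₁ x₂ y₂, ‖g2 t x₁ y₁ - g2 t x₂ y₂‖ ≤ K * (‖x₁ - x₂‖ + ‖y₁ - y₂‖))
    (hg0 : ∃ M, ∀ t ≤ (0:ℝ),
      Real.exp ((γ/ε) * t) * (‖g1 t 0 0‖ + ‖g2 t 0 0‖) ≤ M)
    :
    ∀ (x0 : E₁) (xh₁ : ℝ → E₁) (yh₁ : ℝ → E₂) (xh₂ : ℝ → E₁) (yh₂ : ℝ → E₂),
      MemCneg (-γ/ε) xh₁ → MemCneg (-γ/ε) yh₁ →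
      MemCneg (-γ/ε) xh₂ → MemCneg (-γ/ε) yh₂ →
      negNorm (-γ/ε) (fun t => LPslow S g1 x0 xh₁ yh₁ t - LPslow S g1 x0 xh₂ yh₂ t) +
        negNorm (-γ/ε) (fun t => LPfast F g2 ε xh₁ yh₁ t - LPfast F g2 ε xh₂ yh₂ t) ≤
      (ε * K / (γ + ε * γs) - K / (γ + γf)) *
        (negNorm (-γ/ε) (fun t => xh₁ t - xh₂ t) + negNorm (-γ/ε) (fun t => yh₁ t - yh₂ t)) :=
  lyapunovPerron_lipschitz_general S F γs γf γ K ε hγs hγ hK hgap hε hS hF g1 g2 hg1m hg2m hg1l hg2l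
    hg0
end
end
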